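/- arXiv:2411.08848 — 3 statements merged into one kernel-verified Lean document; each statement's English description precedes it below -/
import Mathlib

section
/- Let (V_x) be {0,1}-valued random variables on a countable set E and let x_1,...,x_{k-1} be distinct with x_k = x_1. Then the truncated correlation defined by ρ_k^T(x_1,...,x_k) = ∑_{π∈Π(k)} (-1)^{ℓ(π)-1}(ℓ(π)-1)! ∏_j ρ_{|π_j|}(x_{π_j}), where ρ_r(y_1,...,y_r) = E[V_{y_1}···V_{y_r}] if y_1,...,y_r are distinct and 0 otherwise, satisfies ρ_k^T(x_1,...,x_{k-1},x_1) = κ_k[V_{x_1},...,V_{x_{k-1}},V_{x_1}] - κ_{k-1}[V_{x_1},...,V_{x_{k-1}}]. -/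
open MeasureTheory Finset
open scoped Classical

/-- The collection of set partitions of `{1,...,k}`. -/
noncomputable def partitionsOf (k : ℕ) : Finset (Finset (Finset (Fin k))) :=
  Finset.univ.filter fun P =>
    (∀ B ∈ P, B.Nonempty) ∧ (∀ B ∈ P, ∀ C ∈ P, B ≠ C → Disjoint B C) ∧
      P.sup id = Finset.univ

/-- The joint (multilinear) cumulant `κ_k[Y_1,...,Y_k]`. -/
noncomputable def jointCumulant {Ω : Type*} [MeasurableSpace Ω] (μ : Measure Ω)
    (k : ℕ) (Y : Fin k → Ω → ℝ) : ℝ :=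
  ∑ P ∈ partitionsOf k,
    (-1 : ℝ) ^ (P.card - 1) * (Nat.factorial (P.card - 1) : ℝ) *
      ∏ B ∈ P, ∫ ω, (∏ i ∈ B, Y i ω) ∂μ

namespace TruncAux

lemma mem_partitionsOf {k : ℕ} {P : Finset (Finset (Fin k))} :
    P ∈ partitionsOf k ↔
      (∀ B ∈ P, B.Nonempty) ∧ (∀ B ∈ P, ∀ C ∈ P, B ≠ C → Disjoint B C) ∧
        P.sup id = Finset.univ := by
  simp [partitionsOf]

lemma exists_block {k : ℕ} {P : Finset (Finset (Fin k))} (hP : P ∈ partitionsOf k)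
    (i : Fin k) : ∃ B ∈ P, i ∈ B := by
  have h := (mem_partitionsOf.mp hP).2.2
  have hi : i ∈ P.sup id := by rw [h]; exact mem_univ i
  simpa using Finset.mem_sup.mp hi

variable {r : ℕ}

/-- Map a block of `Fin (r+1)` down to `Fin r`. -/
noncomputable def phiB (B : Finset (Fin (r + 1))) : Finset (Fin r) :=
  Finset.univ.filter fun j => j.castSucc ∈ B

lemma mem_phiB {B : Finset (Fin (r + 1))} {j : Fin r} :
    j ∈ phiB B ↔ j.castSucc ∈ B := by simp [phiB]

/-- Map a block of `Fin r` up to `Fin (r+1)`, adding `last` to the block of `0`. -/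
noncomputable def psiB (hr : 1 ≤ r) (B : Finset (Fin r)) : Finset (Fin (r + 1)) :=
  if (⟨0, hr⟩ : Fin r) ∈ B then insert (Fin.last r) (B.image Fin.castSucc)
  else B.image Fin.castSucc

lemma last_notMem_image {B : Finset (Fin r)} :
    Fin.last r ∉ B.image Fin.castSucc := by
  simp only [mem_image, not_exists]
  rintro j ⟨hj, h⟩
  exact absurd h (Fin.castSucc_lt_last j).ne

lemma castSucc_mem_image {B : Finset (Fin r)} {j : Fin r} :
    j.castSucc ∈ B.image Fin.castSucc ↔ j ∈ B := by
  simp [Fin.castSucc_inj]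

lemma castSucc_mem_psiB {hr : 1 ≤ r} {B : Finset (Fin r)} {j : Fin r} :
    j.castSucc ∈ psiB hr B ↔ j ∈ B := by
  unfold psiB
  split_ifs with h0
  · simp [Fin.castSucc_inj, (Fin.castSucc_lt_last j).ne]
  · exact castSucc_mem_image

lemma last_mem_psiB {hr : 1 ≤ r} {B : Finset (Fin r)} :
    Fin.last r ∈ psiB hr B ↔ (⟨0, hr⟩ : Fin r) ∈ B := by
  unfold psiB
  split_ifs with h0
  · simp [h0]
  · simp only [h0, iff_false, mem_image, not_exists]
    rintro j ⟨hj, h⟩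
    exact absurd h (Fin.castSucc_lt_last j).ne

lemma phiB_psiB (hr : 1 ≤ r) (B : Finset (Fin r)) : phiB (psiB hr B) = B := by
  ext j
  rw [mem_phiB, castSucc_mem_psiB]

lemma psiB_nonempty {hr : 1 ≤ r} {B : Finset (Fin r)} (hB : B.Nonempty) :
    (psiB hr B).Nonempty := by
  obtain ⟨j, hj⟩ := hB
  exact ⟨j.castSucc, castSucc_mem_psiB.mpr hj⟩

lemma psiB_injective (hr : 1 ≤ r) : Function.Injective (psiB hr) := by
  intro B C h
  rw [← phiB_psiB hr B, ← phiB_psiB hr C, h]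

lemma image_castSucc_phiB (B : Finset (Fin (r + 1))) :
    (phiB B).image Fin.castSucc = B.erase (Fin.last r) := by
  ext i
  simp only [mem_image, mem_phiB, mem_erase]
  constructor
  · rintro ⟨j, hj, rfl⟩
    exact ⟨(Fin.castSucc_lt_last j).ne, hj⟩
  · rintro ⟨hne, hi⟩
    exact ⟨i.castPred hne, by rwa [Fin.castSucc_castPred], Fin.castSucc_castPred i hne⟩

lemma psiB_disjoint (hr : 1 ≤ r) {B C : Finset (Fin r)} (h : Disjoint B C) :
    Disjoint (psiB hr B) (psiB hr C) := by
  rw [Finset.disjoint_left] at h ⊢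
  intro i hiB hiC
  induction i using Fin.lastCases with
  | last =>
    exact h (last_mem_psiB.mp hiB) (last_mem_psiB.mp hiC)
  | cast j =>
    exact h (castSucc_mem_psiB.mp hiB) (castSucc_mem_psiB.mp hiC)

end TruncAux

namespace TruncAux
variable {r : ℕ}

lemma psiB_empty (hr : 1 ≤ r) : psiB hr (∅ : Finset (Fin r)) = ∅ := by
  unfold psiB; simp

lemma psiB_phiB {hr : 1 ≤ r} {P : Finset (Finset (Fin (r + 1)))}
    (hP : P ∈ partitionsOf (r + 1)) {B0 : Finset (Fin (r + 1))} (hB0 : B0 ∈ P)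
    (hz : (⟨0, hr⟩ : Fin r).castSucc ∈ B0) (hL : Fin.last r ∈ B0)
    {B : Finset (Fin (r + 1))} (hB : B ∈ P) : psiB hr (phiB B) = B := by
  obtain ⟨-, hdisj, -⟩ := mem_partitionsOf.mp hP
  by_cases hBB0 : B = B0
  · subst hBB0
    have h0 : (⟨0, hr⟩ : Fin r) ∈ phiB B := mem_phiB.mpr hz
    unfold psiB
    rw [if_pos h0, image_castSucc_phiB, Finset.insert_erase hL]
  · have hd := hdisj B hB B0 hB0 hBB0
    have hz' : (⟨0, hr⟩ : Fin r).castSucc ∉ B := fun h => Finset.disjoint_left.mp hd h hz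
    have hL' : Fin.last r ∉ B := fun h => Finset.disjoint_left.mp hd h hL
    unfold psiB
    rw [if_neg (fun h => hz' (mem_phiB.mp h)), image_castSucc_phiB,
      Finset.erase_eq_of_notMem hL']

lemma phiB_nonempty {hr : 1 ≤ r} {P : Finset (Finset (Fin (r + 1)))}
    (hP : P ∈ partitionsOf (r + 1)) {B0 : Finset (Fin (r + 1))} (hB0 : B0 ∈ P)
    (hz : (⟨0, hr⟩ : Fin r).castSucc ∈ B0) (hL : Fin.last r ∈ B0)
    {B : Finset (Fin (r + 1))} (hB : B ∈ P) : (phiB B).Nonempty := by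
  rcases Finset.eq_empty_or_nonempty (phiB B) with h | h
  · exfalso
    have hB' := psiB_phiB hP hB0 hz hL hB
    rw [h, psiB_empty] at hB'
    exact ((mem_partitionsOf.mp hP).1 B hB).ne_empty hB'.symm
  · exact h

lemma image_phiB_mem {hr : 1 ≤ r} {P : Finset (Finset (Fin (r + 1)))}
    (hP : P ∈ partitionsOf (r + 1)) {B0 : Finset (Fin (r + 1))} (hB0 : B0 ∈ P)
    (hz : (⟨0, hr⟩ : Fin r).castSucc ∈ B0) (hL : Fin.last r ∈ B0) :
    P.image phiB ∈ partitionsOf r := by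
  rw [mem_partitionsOf]
  obtain ⟨hne, hdisj, -⟩ := mem_partitionsOf.mp hP
  refine ⟨?_, ?_, ?_⟩
  · rintro D hD
    obtain ⟨B, hB, rfl⟩ := Finset.mem_image.mp hD
    exact phiB_nonempty hP hB0 hz hL hB
  · rintro D hD D' hD' hne'
    obtain ⟨B, hB, rfl⟩ := Finset.mem_image.mp hD
    obtain ⟨C, hC, rfl⟩ := Finset.mem_image.mp hD'
    have hBC : B ≠ C := fun h => hne' (by rw [h])
    have hd := hdisj B hB C hC hBC
    rw [Finset.disjoint_left] at hd ⊢
    intro j hjB hjC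
    exact hd (mem_phiB.mp hjB) (mem_phiB.mp hjC)
  · apply Finset.eq_univ_iff_forall.mpr
    intro j
    obtain ⟨B, hB, hjB⟩ := exists_block hP j.castSucc
    exact Finset.mem_sup.mpr ⟨phiB B, Finset.mem_image_of_mem _ hB, mem_phiB.mpr hjB⟩

lemma image_psiB_mem (hr : 1 ≤ r) {Q : Finset (Finset (Fin r))}
    (hQ : Q ∈ partitionsOf r) : Q.image (psiB hr) ∈ partitionsOf (r + 1) := by
  rw [mem_partitionsOf]
  obtain ⟨hne, hdisj, -⟩ := mem_partitionsOf.mp hQ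
  refine ⟨?_, ?_, ?_⟩
  · rintro D hD
    obtain ⟨B, hB, rfl⟩ := Finset.mem_image.mp hD
    exact psiB_nonempty (hne B hB)
  · rintro D hD D' hD' hne'
    obtain ⟨B, hB, rfl⟩ := Finset.mem_image.mp hD
    obtain ⟨C, hC, rfl⟩ := Finset.mem_image.mp hD'
    have hBC : B ≠ C := fun h => hne' (by rw [h])
    exact psiB_disjoint hr (hdisj B hB C hC hBC)
  · apply Finset.eq_univ_iff_forall.mpr
    intro i
    induction i using Fin.lastCases with
    | last =>
      obtain ⟨B, hB, h0B⟩ := exists_block hQ ⟨0, hr⟩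
      exact Finset.mem_sup.mpr ⟨psiB hr B, Finset.mem_image_of_mem _ hB,
        last_mem_psiB.mpr h0B⟩
    | cast j =>
      obtain ⟨B, hB, hjB⟩ := exists_block hQ j
      exact Finset.mem_sup.mpr ⟨psiB hr B, Finset.mem_image_of_mem _ hB,
        castSucc_mem_psiB.mpr hjB⟩

lemma image_psiB_same (hr : 1 ≤ r) {Q : Finset (Finset (Fin r))}
    (hQ : Q ∈ partitionsOf r) :
    ∃ D ∈ Q.image (psiB hr), (⟨0, hr⟩ : Fin r).castSucc ∈ D ∧ Fin.last r ∈ D := by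
  obtain ⟨B, hB, h0B⟩ := exists_block hQ ⟨0, hr⟩
  exact ⟨psiB hr B, Finset.mem_image_of_mem _ hB, castSucc_mem_psiB.mpr h0B,
    last_mem_psiB.mpr h0B⟩

lemma phiB_image_psiB (hr : 1 ≤ r) (Q : Finset (Finset (Fin r))) :
    (Q.image (psiB hr)).image phiB = Q := by
  rw [Finset.image_image]
  have h : (phiB ∘ psiB hr) = id := funext (phiB_psiB hr)
  rw [h, Finset.image_id]

lemma psiB_image_phiB {hr : 1 ≤ r} {P : Finset (Finset (Fin (r + 1)))}
    (hP : P ∈ partitionsOf (r + 1)) {B0 : Finset (Fin (r + 1))} (hB0 : B0 ∈ P)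
    (hz : (⟨0, hr⟩ : Fin r).castSucc ∈ B0) (hL : Fin.last r ∈ B0) :
    (P.image phiB).image (psiB hr) = P := by
  rw [Finset.image_image]
  calc P.image (psiB hr ∘ phiB)
      = P.image id := Finset.image_congr fun B hB =>
        psiB_phiB hP hB0 hz hL (Finset.mem_coe.mp hB)
    _ = P := Finset.image_id

lemma prod_psiB {Ω E : Type*} (V : E → Ω → ℝ)
    (hV01 : ∀ x ω, V x ω = 0 ∨ V x ω = 1)
    (hr : 1 ≤ r) (x : Fin r → E) (y : Fin (r + 1) → E)
    (hyc : ∀ j : Fin r, y j.castSucc = x j) (hyL : y (Fin.last r) = x ⟨0, hr⟩)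
    (B : Finset (Fin r)) (ω : Ω) :
    ∏ i ∈ psiB hr B, V (y i) ω = ∏ j ∈ B, V (x j) ω := by
  have key : ∀ a p : ℝ, (a = 0 ∨ a = 1) → a * (a * p) = a * p := by
    rintro a p (rfl | rfl) <;> ring
  unfold psiB
  split_ifs with h0
  · rw [Finset.prod_insert last_notMem_image,
      Finset.prod_image (fun a _ b _ h => Fin.castSucc_inj.mp h)]
    simp only [hyc, hyL]
    rw [← Finset.mul_prod_erase B (fun j => V (x j) ω) h0]
    exact key _ _ (hV01 _ ω)
  · rw [Finset.prod_image (fun a _ b _ h => Fin.castSucc_inj.mp h)]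
    simp only [hyc]

end TruncAux

open TruncAux

/-- For `{0,1}`-valued variables `(V_x)` and `x_1,...,x_{k-1}` distinct with `x_k = x_1`
(here `k = r+1`, `y = (x_1,...,x_{k-1},x_1)`), the truncated correlation defined by the
moment sum `∑_{π∈Π(k)} (-1)^{ℓ(π)-1}(ℓ(π)-1)! ∏_j ρ_{|π_j|}(y_{π_j})`, where
`ρ_r(y_1,...,y_r) = E[V_{y_1}⋯V_{y_r}]` if the `y_i` are distinct and `0` otherwise,
equals `κ_k[V_{x_1},...,V_{x_{k-1}},V_{x_1}] - κ_{k-1}[V_{x_1},...,V_{x_{k-1}}]`. -/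
theorem truncated_correlation_on_diagonal
    {Ω : Type*} [MeasurableSpace Ω] (μ : Measure Ω) [IsProbabilityMeasure μ]
    {E : Type*} (V : E → Ω → ℝ) (hVmeas : ∀ x, Measurable (V x))
    (hV01 : ∀ x ω, V x ω = 0 ∨ V x ω = 1)
    (r : ℕ) (hr : 1 ≤ r) (x : Fin r → E) (hx : Function.Injective x)
    (y : Fin (r + 1) → E) (hy : y = Fin.snoc x (x ⟨0, hr⟩)) :
    ∑ P ∈ partitionsOf (r + 1),
        (-1 : ℝ) ^ (P.card - 1) * (Nat.factorial (P.card - 1) : ℝ) *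
          ∏ B ∈ P,
            (if ∀ i ∈ B, ∀ j ∈ B, y i = y j → i = j then
              ∫ ω, (∏ i ∈ B, V (y i) ω) ∂μ
            else 0) =
      jointCumulant μ (r + 1) (fun i => V (y i)) -
        jointCumulant μ r (fun i => V (x i)) := by
  classical
  have hyc : ∀ j : Fin r, y j.castSucc = x j := fun j => by
    rw [hy]; exact Fin.snoc_castSucc _ _ j
  have hyL : y (Fin.last r) = x ⟨0, hr⟩ := by rw [hy]; exact Fin.snoc_last _ _
  have hz0L : (⟨0, hr⟩ : Fin r).castSucc ≠ Fin.last r := (Fin.castSucc_lt_last _).ne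
  have hyinj : ∀ i j : Fin (r + 1), y i = y j → i ≠ j →
      (i = (⟨0, hr⟩ : Fin r).castSucc ∧ j = Fin.last r) ∨
        (i = Fin.last r ∧ j = (⟨0, hr⟩ : Fin r).castSucc) := by
    intro i j hij hne
    induction i using Fin.lastCases with
    | last =>
      induction j using Fin.lastCases with
      | last => exact absurd rfl hne
      | cast b =>
        rw [hyL, hyc] at hij
        exact Or.inr ⟨rfl, by rw [← hx hij]⟩
    | cast a =>
      induction j using Fin.lastCases with
      | last =>
        rw [hyc, hyL] at hij
        exact Or.inl ⟨by rw [hx hij], rfl⟩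
      | cast b =>
        rw [hyc, hyc] at hij
        exact absurd (by rw [hx hij]) hne
  -- f-term and predicate
  have h1 : ∑ P ∈ (partitionsOf (r + 1)).filter
        (fun P => ∃ B ∈ P, (⟨0, hr⟩ : Fin r).castSucc ∈ B ∧ Fin.last r ∈ B),
      ((-1 : ℝ) ^ (P.card - 1) * (Nat.factorial (P.card - 1) : ℝ) *
        ∏ B ∈ P,
          (if ∀ i ∈ B, ∀ j ∈ B, y i = y j → i = j then
            ∫ ω, (∏ i ∈ B, V (y i) ω) ∂μ
          else 0)) = 0 := by
    refine Finset.sum_eq_zero fun P hP => ?_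
    obtain ⟨hPmem, B0, hB0, hzB, hLB⟩ := Finset.mem_filter.mp hP
    have hzero : (if ∀ i ∈ B0, ∀ j ∈ B0, y i = y j → i = j then
        ∫ ω, (∏ i ∈ B0, V (y i) ω) ∂μ else 0) = 0 := by
      rw [if_neg]
      push_neg
      exact ⟨(⟨0, hr⟩ : Fin r).castSucc, hzB, Fin.last r, hLB,
        by rw [hyc, hyL], hz0L⟩
    rw [Finset.prod_eq_zero hB0 hzero, mul_zero]
  have h2 : ∑ P ∈ (partitionsOf (r + 1)).filter
        (fun P => ¬ ∃ B ∈ P, (⟨0, hr⟩ : Fin r).castSucc ∈ B ∧ Fin.last r ∈ B),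
      ((-1 : ℝ) ^ (P.card - 1) * (Nat.factorial (P.card - 1) : ℝ) *
        ∏ B ∈ P,
          (if ∀ i ∈ B, ∀ j ∈ B, y i = y j → i = j then
            ∫ ω, (∏ i ∈ B, V (y i) ω) ∂μ
          else 0)) =
      ∑ P ∈ (partitionsOf (r + 1)).filter
        (fun P => ¬ ∃ B ∈ P, (⟨0, hr⟩ : Fin r).castSucc ∈ B ∧ Fin.last r ∈ B),
      ((-1 : ℝ) ^ (P.card - 1) * (Nat.factorial (P.card - 1) : ℝ) *
        ∏ B ∈ P, ∫ ω, (∏ i ∈ B, V (y i) ω) ∂μ) := by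
    refine Finset.sum_congr rfl fun P hP => ?_
    obtain ⟨hPmem, hnot⟩ := Finset.mem_filter.mp hP
    congr 1
    refine Finset.prod_congr rfl fun B hB => ?_
    rw [if_pos]
    intro i hi j hj hij
    by_contra hne
    rcases hyinj i j hij hne with ⟨hi', hj'⟩ | ⟨hi', hj'⟩
    · exact hnot ⟨B, hB, hi' ▸ hi, hj' ▸ hj⟩
    · exact hnot ⟨B, hB, hj' ▸ hj, hi' ▸ hi⟩
  have h3 : ∑ P ∈ (partitionsOf (r + 1)).filter
        (fun P => ∃ B ∈ P, (⟨0, hr⟩ : Fin r).castSucc ∈ B ∧ Fin.last r ∈ B),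
      ((-1 : ℝ) ^ (P.card - 1) * (Nat.factorial (P.card - 1) : ℝ) *
        ∏ B ∈ P, ∫ ω, (∏ i ∈ B, V (y i) ω) ∂μ) =
      jointCumulant μ r (fun i => V (x i)) := by
    rw [jointCumulant]
    refine (Finset.sum_bij' (fun Q _ => Q.image (psiB hr))
      (fun P _ => P.image phiB) ?_ ?_ ?_ ?_ ?_).symm
    · intro Q hQ
      refine Finset.mem_filter.mpr ⟨image_psiB_mem hr hQ, ?_⟩
      exact image_psiB_same hr hQ
    · intro P hP
      obtain ⟨hPmem, B0, hB0, hzB, hLB⟩ := Finset.mem_filter.mp hP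
      exact image_phiB_mem hPmem hB0 hzB hLB
    · intro Q hQ
      exact phiB_image_psiB hr Q
    · intro P hP
      obtain ⟨hPmem, B0, hB0, hzB, hLB⟩ := Finset.mem_filter.mp hP
      exact psiB_image_phiB hPmem hB0 hzB hLB
    · intro Q hQ
      rw [Finset.card_image_of_injOn ((psiB_injective hr).injOn),
        Finset.prod_image (fun a _ b _ h => psiB_injective hr h)]
      congr 1
      refine Finset.prod_congr rfl fun B _ => ?_
      simp only [prod_psiB V hV01 hr x y hyc hyL]
  have h4 := Finset.sum_filter_add_sum_filter_not (partitionsOf (r + 1))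
      (fun P => ∃ B ∈ P, (⟨0, hr⟩ : Fin r).castSucc ∈ B ∧ Fin.last r ∈ B)
      (fun P => (-1 : ℝ) ^ (P.card - 1) * (Nat.factorial (P.card - 1) : ℝ) *
        ∏ B ∈ P, ∫ ω, (∏ i ∈ B, V (y i) ω) ∂μ)
  rw [← Finset.sum_filter_add_sum_filter_not (partitionsOf (r + 1))
      (fun P => ∃ B ∈ P, (⟨0, hr⟩ : Fin r).castSucc ∈ B ∧ Fin.last r ∈ B),
    h1, h2]
  have h5 : jointCumulant μ (r + 1) (fun i => V (y i)) =
      jointCumulant μ r (fun i => V (x i)) +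
        ∑ P ∈ (partitionsOf (r + 1)).filter
          (fun P => ¬ ∃ B ∈ P, (⟨0, hr⟩ : Fin r).castSucc ∈ B ∧ Fin.last r ∈ B),
        ((-1 : ℝ) ^ (P.card - 1) * (Nat.factorial (P.card - 1) : ℝ) *
          ∏ B ∈ P, ∫ ω, (∏ i ∈ B, V (y i) ω) ∂μ) := by
    rw [jointCumulant, ← h4, h3]
  rw [h5]
  ring
end

section
/- Let K : ℝ^d × ℝ^d → ℂ be a Hermitian reproducing kernel, i.e., K(x,y) = conj(K(y,x)) and ∫ K(x,y) K(y,z) dy = K(x,z) for all x,z, with all relevant integrals finite. Define ρ_k^T(x_1,...,x_k) = (-1)^{k-1} ∑_{P cyclic permutation of [k]} ∏_{i=1}^k K(x_i, x_{P(i)}). Then ∫_{ℝ^d} ρ_k^T(x_1,...,x_k) dx_k = -(k-1) ρ_{k-1}^T(x_1,...,x_{k-1}). -/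
open MeasureTheory
open scoped Classical

/-- Truncated correlation of a determinantal point process:
`ρ_k^T(x_1,...,x_k) = (-1)^{k-1} ∑_{P cyclic} ∏_i K(x_i, x_{P(i)})`, where the sum is over
cyclic permutations of `[k]` (permutations generating a transitive action). -/
noncomputable def detTruncCorr (d k : ℕ)
    (K : EuclideanSpace ℝ (Fin d) → EuclideanSpace ℝ (Fin d) → ℂ)
    (x : Fin k → EuclideanSpace ℝ (Fin d)) : ℂ :=
  (-1 : ℂ) ^ (k - 1) *
    ∑ P ∈ Finset.univ.filter
        (fun P : Equiv.Perm (Fin k) => ∀ i j : Fin k, ∃ n : ℕ, (P ^ n) i = j),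
      ∏ i, K (x i) (x (P i))

namespace DetTruncAux


variable {α : Type*}

theorem pow_fix {β : Type*} (P : Equiv.Perm β) {x : β} (h : P x = x) :
    ∀ n : ℕ, (P ^ n) x = x := by
  intro n
  induction n with
  | zero => simp
  | succ n ih => rw [pow_succ, Equiv.Perm.mul_apply, h, ih]

theorem removeNone_pow_some (σ : Equiv.Perm (Option α)) (n : ℕ) (a : α) :
    ∃ m : ℕ, (σ ^ m) (some a) = some (((Equiv.removeNone σ) ^ n) a) := by
  induction n with
  | zero => exact ⟨0, by simp⟩
  | succ n ih =>
    obtain ⟨m, hm⟩ := ih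
    set c := ((Equiv.removeNone σ) ^ n) a with hc
    have hstep : ((Equiv.removeNone σ) ^ (n + 1)) a = Equiv.removeNone σ c := by
      rw [pow_succ', Equiv.Perm.mul_apply]
    rcases h : σ (some c) with _ | d
    · have h1 : some (Equiv.removeNone σ c) = σ none := Equiv.removeNone_none σ h
      refine ⟨m + 2, ?_⟩
      rw [hstep, pow_succ', pow_succ', Equiv.Perm.mul_apply, Equiv.Perm.mul_apply, hm, h, ← h1]
    · have h1 : some (Equiv.removeNone σ c) = σ (some c) := Equiv.removeNone_some σ ⟨d, h⟩
      refine ⟨m + 1, ?_⟩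
      rw [hstep, pow_succ', Equiv.Perm.mul_apply, hm, ← h1]

theorem pow_some_removeNone (σ : Equiv.Perm (Option α)) :
    ∀ (m : ℕ) (a b : α), (σ ^ m) (some a) = some b →
      ∃ n : ℕ, ((Equiv.removeNone σ) ^ n) a = b := by
  intro m
  induction m using Nat.strong_induction_on with
  | _ m ih =>
    match m with
    | 0 => intro a b h; exact ⟨0, by simpa using h⟩
    | Nat.succ m =>
      intro a b h
      rw [pow_succ, Equiv.Perm.mul_apply] at h
      rcases h1 : σ (some a) with _ | c
      · rw [h1] at h
        have h2 : some (Equiv.removeNone σ a) = σ none := Equiv.removeNone_none σ h1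
        match m, h with
        | Nat.succ m', h =>
          rw [pow_succ, Equiv.Perm.mul_apply, ← h2] at h
          obtain ⟨n, hn⟩ := ih m' (by omega) _ _ h
          refine ⟨n + 1, ?_⟩
          rw [pow_succ, Equiv.Perm.mul_apply, hn]
      · rw [h1] at h
        have h2 : Equiv.removeNone σ a = c := by
          have := Equiv.removeNone_some σ ⟨c, h1⟩
          rw [h1] at this; exact Option.some_injective _ this
        obtain ⟨n, hn⟩ := ih m (by omega) _ _ h
        refine ⟨n + 1, ?_⟩
        rw [pow_succ, Equiv.Perm.mul_apply, h2, hn]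

theorem cyclic_removeNone (σ : Equiv.Perm (Option α))
    (h : ∀ i j : Option α, ∃ n : ℕ, (σ ^ n) i = j) (a b : α) :
    ∃ n : ℕ, ((Equiv.removeNone σ) ^ n) a = b := by
  obtain ⟨m, hm⟩ := h (some a) (some b)
  exact pow_some_removeNone σ m a b hm

theorem cyclic_of_removeNone (σ : Equiv.Perm (Option α)) (hσ : σ none ≠ none)
    (h : ∀ a b : α, ∃ n : ℕ, ((Equiv.removeNone σ) ^ n) a = b) :
    ∀ i j : Option α, ∃ n : ℕ, (σ ^ n) i = j := by
  obtain ⟨b₀, hb₀⟩ : ∃ b₀, σ none = some b₀ := Option.ne_none_iff_exists'.mp hσ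
  obtain ⟨a₀, ha₀⟩ : ∃ a₀, σ.symm none = some a₀ := by
    refine Option.ne_none_iff_exists'.mp fun hc => hσ ?_
    have := congrArg σ hc
    rw [σ.apply_symm_apply] at this
    exact this.symm
  have ha₀' : σ (some a₀) = none := by rw [← ha₀]; exact σ.apply_symm_apply none
  have hss : ∀ a b : α, ∃ n, (σ ^ n) (some a) = some b := by
    intro a b
    obtain ⟨n, hn⟩ := h a b
    obtain ⟨m, hm⟩ := removeNone_pow_some σ n a
    exact ⟨m, by rw [hm, hn]⟩
  have hsn : ∀ a : α, ∃ n, (σ ^ n) (some a) = none := by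
    intro a
    obtain ⟨m, hm⟩ := hss a a₀
    exact ⟨m + 1, by rw [pow_succ', Equiv.Perm.mul_apply, hm, ha₀']⟩
  have hns : ∀ b : α, ∃ n, (σ ^ n) none = some b := by
    intro b
    obtain ⟨m, hm⟩ := hss b₀ b
    exact ⟨m + 1, by rw [pow_succ, Equiv.Perm.mul_apply, hb₀, hm]⟩
  rintro (_ | a) (_ | b)
  · exact ⟨0, rfl⟩
  · exact hns b
  · exact hsn a
  · exact hss a b

theorem permCongr_pow_apply {β : Type*} (e : α ≃ β) (P : Equiv.Perm α) (n : ℕ) (x : β) :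
    ((e.permCongr P) ^ n) x = e ((P ^ n) (e.symm x)) := by
  induction n with
  | zero => simp
  | succ n ih =>
    rw [pow_succ', pow_succ', Equiv.Perm.mul_apply, Equiv.Perm.mul_apply, ih]
    simp

theorem cyclic_congr {β : Type*} (e : α ≃ β) (P : Equiv.Perm α) :
    (∀ i j : α, ∃ n : ℕ, (P ^ n) i = j) ↔
      (∀ i j : β, ∃ n : ℕ, ((e.permCongr P) ^ n) i = j) := by
  constructor
  · intro h i j
    obtain ⟨n, hn⟩ := h (e.symm i) (e.symm j)
    exact ⟨n, by rw [permCongr_pow_apply, hn, e.apply_symm_apply]⟩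
  · intro h i j
    obtain ⟨n, hn⟩ := h (e i) (e j)
    refine ⟨n, ?_⟩
    have h2 := permCongr_pow_apply e P n (e i)
    rw [hn, e.symm_apply_apply] at h2
    exact e.injective h2.symm

theorem sum_cyclic_succ {r : ℕ} (hr : 1 ≤ r) {M : Type*} [AddCommMonoid M]
    (h : Equiv.Perm (Fin r) → M) :
    ∑ P ∈ Finset.univ.filter
        (fun P : Equiv.Perm (Fin (r+1)) => ∀ i j : Fin (r+1), ∃ n : ℕ, (P ^ n) i = j),
      h (Equiv.removeNone (finSuccEquivLast.permCongr P)) =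
    r • ∑ Q ∈ Finset.univ.filter
        (fun Q : Equiv.Perm (Fin r) => ∀ i j : Fin r, ∃ n : ℕ, (Q ^ n) i = j), h Q := by
  classical
  set eqv : Equiv.Perm (Fin (r+1)) ≃ Option (Fin r) × Equiv.Perm (Fin r) :=
    finSuccEquivLast.permCongr.trans Equiv.Perm.decomposeOption with heqv
  have hkey : ∀ (o : Option (Fin r)) (Q : Equiv.Perm (Fin r)),
      (∀ i j : Fin (r+1), ∃ n : ℕ, ((eqv.symm (o, Q)) ^ n) i = j) ↔
        (o ≠ none ∧ ∀ i j : Fin r, ∃ n : ℕ, (Q ^ n) i = j) := by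
    intro o Q
    set σ : Equiv.Perm (Option (Fin r)) := Equiv.Perm.decomposeOption.symm (o, Q) with hσdef
    have h1 : σ none = o := congrArg Prod.fst (Equiv.Perm.decomposeOption.apply_symm_apply (o, Q))
    have h2 : Equiv.removeNone σ = Q :=
      congrArg Prod.snd (Equiv.Perm.decomposeOption.apply_symm_apply (o, Q))
    have h3 : eqv.symm (o, Q) = finSuccEquivLast.symm.permCongr σ := by
      rw [heqv]; rfl
    rw [h3, ← cyclic_congr finSuccEquivLast.symm σ]
    constructor
    · intro hcyc
      constructor
      · intro ho
        obtain ⟨n, hn⟩ := hcyc none (some ⟨0, hr⟩)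
        rw [pow_fix σ (ho ▸ h1) n] at hn
        exact Option.some_ne_none _ hn.symm
      · intro a b
        rw [← h2]
        exact cyclic_removeNone σ hcyc a b
    · rintro ⟨ho, hQ⟩
      refine cyclic_of_removeNone σ (by rw [h1]; exact ho) ?_
      intro a b; rw [h2]; exact hQ a b
  rw [Finset.sum_filter]
  rw [Fintype.sum_bijective eqv eqv.bijective _
      (fun p => if (∀ i j : Fin (r+1), ∃ n : ℕ, ((eqv.symm p) ^ n) i = j) then h p.2 else 0)
      (fun P => by
        simp only [Equiv.symm_apply_apply]
        congr 1)]
  · rw [Fintype.sum_prod_type, Fintype.sum_option]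
    have hnone : (∑ Q : Equiv.Perm (Fin r),
        if (∀ i j : Fin (r+1), ∃ n : ℕ, ((eqv.symm ((none : Option (Fin r)), Q)) ^ n) i = j)
        then h Q else 0) = 0 := by
      refine Finset.sum_eq_zero fun Q _ => ?_
      rw [if_neg]
      intro hc
      exact ((hkey none Q).mp hc).1 rfl
    have hsome : ∀ b : Fin r, (∑ Q : Equiv.Perm (Fin r),
        if (∀ i j : Fin (r+1), ∃ n : ℕ, ((eqv.symm (some b, Q)) ^ n) i = j)
        then h Q else 0) =
        ∑ Q ∈ Finset.univ.filter
          (fun Q : Equiv.Perm (Fin r) => ∀ i j : Fin r, ∃ n : ℕ, (Q ^ n) i = j), h Q := by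
      intro b
      rw [Finset.sum_filter]
      refine Finset.sum_congr rfl fun Q _ => ?_
      refine if_congr ?_ rfl rfl
      rw [hkey (some b) Q]
      simp
    rw [hnone, zero_add]
    rw [Finset.sum_congr rfl fun b _ => hsome b]
    rw [Finset.sum_const, Finset.card_univ, Fintype.card_fin]

end DetTruncAux

/-- For a Hermitian reproducing kernel `K`, integrating out the last variable of the
`k`-point truncated correlation gives `-(k-1)` times the `(k-1)`-point truncated
correlation (here `k = r+1`). -/
theorem integral_detTruncCorr (d r : ℕ) (hd : 1 ≤ d) (hr : 1 ≤ r)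
    (K : EuclideanSpace ℝ (Fin d) → EuclideanSpace ℝ (Fin d) → ℂ)
    (hHerm : ∀ x y, K x y = starRingEnd ℂ (K y x))
    (hInt : ∀ x z, Integrable (fun y => K x y * K y z))
    (hRepro : ∀ x z, (∫ y, K x y * K y z) = K x z)
    (x : Fin r → EuclideanSpace ℝ (Fin d))
    (hIntρ : Integrable (fun u => detTruncCorr d (r + 1) K (Fin.snoc x u))) :
    (∫ u, detTruncCorr d (r + 1) K (Fin.snoc x u)) = -(r : ℂ) * detTruncCorr d r K x := by
  classical
  set S := Finset.univ.filter
      (fun P : Equiv.Perm (Fin (r+1)) => ∀ i j : Fin (r+1), ∃ n : ℕ, (P ^ n) i = j) with hS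
  have main : ∀ P ∈ S,
      Integrable (fun u => ∏ i : Fin (r + 1), K ((Fin.snoc x u : Fin (r + 1) → EuclideanSpace ℝ (Fin d)) i) ((Fin.snoc x u : Fin (r + 1) → EuclideanSpace ℝ (Fin d)) (P i))) ∧
      (∫ u, ∏ i : Fin (r + 1), K ((Fin.snoc x u : Fin (r + 1) → EuclideanSpace ℝ (Fin d)) i) ((Fin.snoc x u : Fin (r + 1) → EuclideanSpace ℝ (Fin d)) (P i))) =
        ∏ i : Fin r, K (x i) (x ((Equiv.removeNone (finSuccEquivLast.permCongr P)) i)) := by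
    intro P hP
    rw [hS, Finset.mem_filter] at hP
    have hcyc := hP.2
    set Q := Equiv.removeNone (finSuccEquivLast.permCongr P) with hQ
    have hPlast : P (Fin.last r) ≠ Fin.last r := by
      intro he
      obtain ⟨n, hn⟩ := hcyc (Fin.last r) (Fin.castSucc ⟨0, hr⟩)
      rw [DetTruncAux.pow_fix P he n] at hn
      exact (Fin.castSucc_lt_last ⟨0, hr⟩).ne hn.symm
    have hPinv : P⁻¹ (Fin.last r) ≠ Fin.last r := by
      intro he
      apply hPlast
      nth_rewrite 1 [← he]
      exact P.apply_symm_apply _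
    set a := (P⁻¹ (Fin.last r)).castPred hPinv with ha
    set b := (P (Fin.last r)).castPred hPlast with hb
    have haP : P (Fin.castSucc a) = Fin.last r := by
      rw [ha, Fin.castSucc_castPred, Equiv.Perm.inv_def, Equiv.apply_symm_apply]
    have hbP : Fin.castSucc b = P (Fin.last r) := by
      rw [hb, Fin.castSucc_castPred]
    have hQother : ∀ i : Fin r, i ≠ a → Fin.castSucc (Q i) = P (Fin.castSucc i) := by
      intro i hia
      have hne : P (Fin.castSucc i) ≠ Fin.last r := by
        intro he
        exact hia (Fin.castSucc_injective _ (P.injective (he.trans haP.symm)))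
      obtain ⟨c, hc⟩ := Fin.exists_castSucc_eq.mpr hne
      have hσ : (finSuccEquivLast.permCongr P) (some i) = some c := by
        rw [Equiv.permCongr_apply, finSuccEquivLast_symm_some, ← hc, finSuccEquivLast_castSucc]
      have h2 := Equiv.removeNone_some _ ⟨c, hσ⟩
      rw [hσ] at h2
      have hQi : Q i = c := Option.some_injective _ h2
      rw [hQi]
      exact hc
    have hQa : Q a = b := by
      have hσa : (finSuccEquivLast.permCongr P) (some a) = none := by
        rw [Equiv.permCongr_apply, finSuccEquivLast_symm_some, haP, finSuccEquivLast_last]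
      have h2 := Equiv.removeNone_none _ hσa
      have hσn : (finSuccEquivLast.permCongr P) none = some b := by
        rw [Equiv.permCongr_apply, finSuccEquivLast_symm_none, ← hbP, finSuccEquivLast_castSucc]
      rw [hσn] at h2
      exact Option.some_injective _ h2
    have hprod : ∀ u, (∏ i : Fin (r + 1), K ((Fin.snoc x u : Fin (r + 1) → EuclideanSpace ℝ (Fin d)) i) ((Fin.snoc x u : Fin (r + 1) → EuclideanSpace ℝ (Fin d)) (P i))) =
        (∏ i ∈ Finset.univ.erase a, K (x i) (x (Q i))) * (K (x a) u * K u (x b)) := by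
      intro u
      rw [Fin.prod_univ_castSucc]
      rw [← Finset.mul_prod_erase Finset.univ _ (Finset.mem_univ a)]
      have e1 : K ((Fin.snoc x u : Fin (r + 1) → EuclideanSpace ℝ (Fin d)) (Fin.castSucc a)) ((Fin.snoc x u : Fin (r + 1) → EuclideanSpace ℝ (Fin d)) (P (Fin.castSucc a)))
          = K (x a) u := by
        rw [haP, Fin.snoc_castSucc, Fin.snoc_last]
      have e2 : K ((Fin.snoc x u : Fin (r + 1) → EuclideanSpace ℝ (Fin d)) (Fin.last r)) ((Fin.snoc x u : Fin (r + 1) → EuclideanSpace ℝ (Fin d)) (P (Fin.last r)))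
          = K u (x b) := by
        rw [← hbP, Fin.snoc_last, Fin.snoc_castSucc]
      have e3 : ∀ i ∈ Finset.univ.erase a,
          K ((Fin.snoc x u : Fin (r + 1) → EuclideanSpace ℝ (Fin d)) (Fin.castSucc i)) ((Fin.snoc x u : Fin (r + 1) → EuclideanSpace ℝ (Fin d)) (P (Fin.castSucc i)))
            = K (x i) (x (Q i)) := by
        intro i hi
        rw [← hQother i (Finset.ne_of_mem_erase hi), Fin.snoc_castSucc, Fin.snoc_castSucc]
      rw [e1, e2, Finset.prod_congr rfl e3]
      ring
    have hfun : (fun u => ∏ i : Fin (r + 1), K ((Fin.snoc x u : Fin (r + 1) → EuclideanSpace ℝ (Fin d)) i) ((Fin.snoc x u : Fin (r + 1) → EuclideanSpace ℝ (Fin d)) (P i))) =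
        fun u => (∏ i ∈ Finset.univ.erase a, K (x i) (x (Q i))) * (K (x a) u * K u (x b)) :=
      funext hprod
    constructor
    · rw [hfun]
      exact (hInt (x a) (x b)).const_mul _
    · rw [hfun, MeasureTheory.integral_const_mul, hRepro]
      have : K (x a) (x b) = K (x a) (x (Q a)) := by rw [hQa]
      rw [this, mul_comm]
      exact Finset.mul_prod_erase Finset.univ (fun i => K (x i) (x (Q i))) (Finset.mem_univ a)
  have expand : ∀ u, detTruncCorr d (r+1) K (Fin.snoc x u) =
      (-1:ℂ)^r * ∑ P ∈ S, ∏ i : Fin (r + 1), K ((Fin.snoc x u : Fin (r + 1) → EuclideanSpace ℝ (Fin d)) i) ((Fin.snoc x u : Fin (r + 1) → EuclideanSpace ℝ (Fin d)) (P i)) := by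
    intro u
    simp only [detTruncCorr, Nat.add_sub_cancel, hS]
  simp only [expand]
  rw [MeasureTheory.integral_const_mul,
    MeasureTheory.integral_finset_sum S (fun P hP => (main P hP).1),
    Finset.sum_congr rfl (fun P hP => (main P hP).2), hS,
    DetTruncAux.sum_cyclic_succ hr (fun Q : Equiv.Perm (Fin r) => ∏ i : Fin r, K (x i) (x (Q i)))]
  simp only [detTruncCorr]
  obtain ⟨s, rfl⟩ : ∃ s, r = s + 1 := ⟨r - 1, (Nat.succ_pred_eq_of_pos hr).symm⟩
  simp only [Nat.add_sub_cancel, nsmul_eq_mul, pow_succ]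
  push_cast
  ring
end

section
/- Let K be a finite signed Borel measure on ℝ^d satisfying ∫ z^γ dK(z) = 0 for all multi-indices γ with |γ| ≤ 2k+1, and ∫ |z|^{2k+1} d|K|(z) < ∞. For L ≥ 1 define K_L by K_L(A) = L^d K(L·A). Then for any f ∈ L¹(ℝ^d) and any g ∈ C_b^{2k+1}(ℝ^d) (bounded with bounded continuous partial derivatives up to order 2k+1), |∫∫ f(x)(g(x−z) − g(x)) dK_L(z) dx| ≤ C L^{d−2k−1}, where C depends only on ‖f‖_{L¹}, sup_{|α|=2k+1} ‖∂^α g‖_∞, and ∫ |z|^{2k+1} d|K|(z). -/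
open MeasureTheory

/-- Partial derivative in the `i`-th coordinate direction. -/
noncomputable def pderivCoord (d : ℕ) (i : Fin d) (f : (Fin d → ℝ) → ℝ) :
    (Fin d → ℝ) → ℝ :=
  fun x => fderiv ℝ f x (Pi.single i 1)

/-- Multi-index partial derivative `∂^γ f`. -/
noncomputable def multiPDeriv (d : ℕ) (γ : Fin d → ℕ) (f : (Fin d → ℝ) → ℝ) :
    (Fin d → ℝ) → ℝ :=
  (List.ofFn fun i : Fin d => (pderivCoord d i)^[γ i]).foldr (fun F g => F g) f

noncomputable def pders (d : ℕ) (l : List (Fin d)) (h : (Fin d → ℝ) → ℝ) : (Fin d → ℝ) → ℝ :=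
  l.foldr (fun i F => pderivCoord d i F) h


section Aux

open Set

variable {d : ℕ}

@[simp] lemma pders_nil (h : (Fin d → ℝ) → ℝ) : pders d [] h = h := rfl
@[simp] lemma pders_cons (i : Fin d) (l : List (Fin d)) (h : (Fin d → ℝ) → ℝ) :
    pders d (i :: l) h = pderivCoord d i (pders d l h) := rfl

lemma contDiff_pderivCoord {h : (Fin d → ℝ) → ℝ} {m : ℕ} (hh : ContDiff ℝ ((m+1 : ℕ) : ℕ∞) h)
    (i : Fin d) : ContDiff ℝ (m : ℕ∞) (pderivCoord d i h) := by
  have h1 : ContDiff ℝ (m : ℕ∞) (fderiv ℝ h) := hh.fderiv_right (by push_cast; rfl)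
  exact h1.clm_apply contDiff_const

lemma contDiff_pders {h : (Fin d → ℝ) → ℝ} :
    ∀ (l : List (Fin d)) (m : ℕ), ContDiff ℝ ((m + l.length : ℕ) : ℕ∞) h →
      ContDiff ℝ (m : ℕ∞) (pders d l h) := by
  intro l
  induction l with
  | nil => intro m hh; simpa using hh
  | cons i l ih =>
      intro m hh
      rw [pders_cons]
      refine contDiff_pderivCoord (ih (m + 1) ?_) i
      have : (m + 1) + l.length = m + (i :: l).length := by simp; omega
      rw [this]; exact hh

lemma pderivCoord_comm {h : (Fin d → ℝ) → ℝ} (hh : ContDiff ℝ 2 h) (i j : Fin d) :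
    pderivCoord d i (pderivCoord d j h) = pderivCoord d j (pderivCoord d i h) := by
  funext x
  have hd1 : Differentiable ℝ (fderiv ℝ h) :=
    (hh.fderiv_right (m := 1) (by norm_num)).differentiable one_ne_zero
  have comp : ∀ (v : Fin d → ℝ),
      fderiv ℝ (fun y => fderiv ℝ h y v) x = (fderiv ℝ (fderiv ℝ h) x).flip v := by
    intro v
    rw [fderiv_clm_apply (hd1.differentiableAt) (differentiableAt_const v)]
    simp
  show fderiv ℝ (fun y => fderiv ℝ h y (Pi.single j 1)) x (Pi.single i 1) =
    fderiv ℝ (fun y => fderiv ℝ h y (Pi.single i 1)) x (Pi.single j 1)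
  rw [comp, comp]
  simp only [ContinuousLinearMap.flip_apply]
  exact ((hh.contDiffAt).isSymmSndFDerivAt (by norm_num)).eq _ _

lemma pders_perm {h : (Fin d → ℝ) → ℝ} {N : ℕ} (hh : ContDiff ℝ (N : ℕ∞) h)
    {l l' : List (Fin d)} (hp : l.Perm l') : l.length ≤ N → pders d l h = pders d l' h := by
  induction hp with
  | nil => intro _; rfl
  | cons a p ih =>
      intro hl
      rw [pders_cons, pders_cons, ih (by simpa using Nat.le_of_succ_le (by simpa using hl))]
  | swap a b l =>
      intro hl
      have h2 : ContDiff ℝ ((2 : ℕ) : ℕ∞) (pders d l h) := by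
        refine contDiff_pders l 2 (hh.of_le ?_)
        have : (2 + l.length : ℕ) ≤ N := by simp at hl; omega
        exact_mod_cast this
      simp only [pders_cons]
      exact pderivCoord_comm h2 b a
  | trans p1 p2 ih1 ih2 =>
      intro hl
      rw [ih1 hl, ih2 (by rw [← p1.length_eq]; exact hl)]

lemma pders_replicate (m : ℕ) (i : Fin d) (l : List (Fin d)) (h : (Fin d → ℝ) → ℝ) :
    pders d (List.replicate m i ++ l) h = (pderivCoord d i)^[m] (pders d l h) := by
  induction m with
  | zero => rfl
  | succ m ih =>
      rw [List.replicate_succ, List.cons_append, pders_cons, ih]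
      exact (Function.iterate_succ_apply' _ _ _).symm

def sortedOf (γ : Fin d → ℕ) : List (Fin d) := (List.ofFn fun i => List.replicate (γ i) i).flatten

lemma multiPDeriv_eq_pders (γ : Fin d → ℕ) (h : (Fin d → ℝ) → ℝ) :
    multiPDeriv d γ h = pders d (sortedOf γ) h := by
  unfold multiPDeriv sortedOf
  rw [List.ofFn_eq_map, List.ofFn_eq_map]
  induction (List.finRange d) with
  | nil => rfl
  | cons a l ih =>
      simp only [List.map_cons, List.foldr_cons, List.flatten_cons, pders_replicate, ih]

lemma sum_count_length (l : List (Fin d)) : ∑ i, l.count i = l.length := by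
  induction l with
  | nil => simp
  | cons a l ih =>
      simp only [List.count_cons, List.length_cons, ← ih, Finset.sum_add_distrib]
      congr 1
      simp [beq_iff_eq]

def countOf {n : ℕ} (ι : Fin n → Fin d) : Fin d → ℕ := fun i => (List.ofFn ι).count i

lemma sum_countOf {n : ℕ} (ι : Fin n → Fin d) : ∑ i, countOf ι i = n := by
  simp only [countOf]; rw [sum_count_length]; simp

lemma perm_sortedOf {n : ℕ} (ι : Fin n → Fin d) :
    (List.ofFn ι).Perm (sortedOf (countOf ι)) := by
  rw [List.perm_iff_count]
  intro a
  rw [sortedOf, List.count_flatten, List.map_ofFn, List.sum_ofFn]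
  simp only [Function.comp, List.count_replicate, beq_iff_eq]
  rw [Finset.sum_ite_eq' Finset.univ a (countOf ι)]
  simp [countOf]

lemma prod_count (z : Fin d → ℝ) (l : List (Fin d)) :
    (l.map z).prod = ∏ i, z i ^ l.count i := by
  induction l with
  | nil => simp
  | cons a l ih =>
      simp only [List.map_cons, List.prod_cons, ih, List.count_cons]
      have h1 : ∀ i : Fin d, z i ^ (List.count i l + if (a == i) = true then 1 else 0)
          = (z i ^ List.count i l) * (if i = a then z i else 1) := by
        intro i
        by_cases hia : a = i
        · simp [hia, pow_add]
        · simp [hia, Ne.symm hia]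
      rw [Finset.prod_congr rfl fun i _ => h1 i, Finset.prod_mul_distrib,
        Finset.prod_ite_eq' Finset.univ a z]
      simp [mul_comm]

lemma prod_eq_prod_pow {j : ℕ} (ι : Fin j → Fin d) (z : Fin d → ℝ) :
    (∏ m, z (ι m)) = ∏ i, z i ^ countOf ι i := by
  rw [← List.prod_ofFn (f := fun m => z (ι m)),
    show List.ofFn (fun m => z (ι m)) = (List.ofFn ι).map z by rw [List.map_ofFn]; rfl,
    prod_count]
  rfl

variable {g : (Fin d → ℝ) → ℝ}

lemma itFD_basis {N : ℕ} (hg : ContDiff ℝ (N : ℕ∞) g) :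
    ∀ (j : ℕ), j ≤ N → ∀ (ι : Fin j → Fin d) (y : Fin d → ℝ),
      iteratedFDeriv ℝ j g y (fun m => Pi.single (ι m) 1) = pders d (List.ofFn ι) g y := by
  intro j
  induction j with
  | zero => intro _ ι y; simp [pders]
  | succ j ih =>
      intro hj ι y
      rw [iteratedFDeriv_succ_apply_left]
      have hdiff : Differentiable ℝ (iteratedFDeriv ℝ j g) :=
        hg.differentiable_iteratedFDeriv (by exact_mod_cast hj)
      have comp : ∀ (mv : Fin j → (Fin d → ℝ)) (y : Fin d → ℝ),
          fderiv ℝ (fun w => iteratedFDeriv ℝ j g w mv) y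
            = (ContinuousMultilinearMap.apply ℝ (fun _ : Fin j => Fin d → ℝ) ℝ mv).comp
                (fderiv ℝ (iteratedFDeriv ℝ j g) y) := by
        intro mv y
        exact (((ContinuousMultilinearMap.apply ℝ _ ℝ mv).hasFDerivAt).comp y
          (hdiff y).hasFDerivAt).fderiv
      have tail_eq : (fun w => iteratedFDeriv ℝ j g w
            (Fin.tail fun m : Fin (j+1) => (Pi.single (ι m) 1 : Fin d → ℝ)))
          = pders d (List.ofFn (fun m => ι m.succ)) g := by
        funext w
        exact ih (Nat.le_of_succ_le hj) (fun m => ι m.succ) w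
      rw [List.ofFn_succ, pders_cons, ← tail_eq]
      show _ = fderiv ℝ (fun w => iteratedFDeriv ℝ j g w
        (Fin.tail fun m : Fin (j+1) => (Pi.single (ι m) 1 : Fin d → ℝ))) y (Pi.single (ι 0) 1)
      rw [comp]
      rfl

lemma itFD_expand (j : ℕ) (y v : Fin d → ℝ) :
    iteratedFDeriv ℝ j g y (fun _ => v) =
      ∑ ι : Fin j → Fin d, (∏ m, v (ι m)) *
        iteratedFDeriv ℝ j g y (fun m => Pi.single (ι m) 1) := by
  have hv : (fun _ : Fin j => v) = fun _ : Fin j => ∑ i : Fin d, v i • (Pi.single i 1 : Fin d → ℝ) := by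
    funext m
    rw [← Finset.univ_sum_single v]
    congr 1
    funext i
    rw [← Pi.single_smul]
    norm_num
  rw [hv]
  have h2 := (iteratedFDeriv ℝ j g y).toMultilinearMap.map_sum
    (fun (_ : Fin j) (i : Fin d) => v i • (Pi.single i 1 : Fin d → ℝ))
  simp only [ContinuousMultilinearMap.coe_coe] at h2
  rw [h2]
  refine Finset.sum_congr rfl fun ι _ => ?_
  have h3 := (iteratedFDeriv ℝ j g y).toMultilinearMap.map_smul_univ
    (fun m => v (ι m)) (fun m => (Pi.single (ι m) 1 : Fin d → ℝ))
  simp only [ContinuousMultilinearMap.coe_coe] at h3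
  rw [h3, smul_eq_mul]

lemma pdLineDeriv {N : ℕ} (hg : ContDiff ℝ (N : ℕ∞) g) (x v : Fin d → ℝ) :
    ∀ (j : ℕ), j ≤ N → ∀ t : ℝ, iteratedDeriv j (fun s : ℝ => g (x + s • v)) t
      = iteratedFDeriv ℝ j g (x + t • v) (fun _ => v) := by
  intro j
  induction j with
  | zero => intro _ t; simp
  | succ j ih =>
      intro hj t
      rw [iteratedDeriv_succ]
      have heq : iteratedDeriv j (fun s : ℝ => g (x + s • v))
          = fun s => iteratedFDeriv ℝ j g (x + s • v) (fun _ => v) :=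
        funext fun s => ih (Nat.le_of_succ_le hj) s
      rw [heq]
      have hdiff : Differentiable ℝ (iteratedFDeriv ℝ j g) :=
        hg.differentiable_iteratedFDeriv (by exact_mod_cast hj)
      have hline : ∀ s : ℝ, HasDerivAt (fun s : ℝ => x + s • v) v s := by
        intro s
        have h0 : HasDerivAt (fun s : ℝ => s • v) ((1:ℝ) • v) s :=
          (hasDerivAt_id s).smul_const v
        rw [one_smul] at h0
        exact h0.const_add x
      have happ : HasDerivAt (fun s => iteratedFDeriv ℝ j g (x + s • v) (fun _ => v))
          ((fderiv ℝ (iteratedFDeriv ℝ j g) (x + t • v) v) (fun _ : Fin j => v)) t := by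
        have hF : HasDerivAt (fun s => iteratedFDeriv ℝ j g (x + s • v))
            (fderiv ℝ (iteratedFDeriv ℝ j g) (x + t • v) v) t :=
          (hdiff (x + t • v)).hasFDerivAt.comp_hasDerivAt t (hline t)
        exact ((ContinuousMultilinearMap.apply ℝ (fun _ : Fin j => Fin d → ℝ) ℝ
          (fun _ : Fin j => v)).hasFDerivAt).comp_hasDerivAt t hF
      exact happ.deriv.trans (iteratedFDeriv_succ_apply_left (fun _ : Fin (j+1) => v)).symm

lemma idw {φ : ℝ → ℝ} {N : ℕ} (hφ : ContDiff ℝ (N : ℕ∞) φ) {m : ℕ} (hm : m ≤ N) {t : ℝ}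
    (ht : t ∈ Icc (0:ℝ) 1) :
    iteratedDerivWithin m φ (Icc 0 1) t = iteratedDeriv m φ t := by
  have h1 : HasFTaylorSeriesUpToOn ((N:ℕ∞) : WithTop ℕ∞) φ (ftaylorSeriesWithin ℝ φ univ) (Icc 0 1) :=
    ((hφ.contDiffOn : ContDiffOn ℝ (N:ℕ∞) φ univ).ftaylorSeriesWithin uniqueDiffOn_univ).mono
      (subset_univ _)
  have h2 := h1.eq_iteratedFDerivWithin_of_uniqueDiffOn (m := m) (by exact_mod_cast hm)
    (uniqueDiffOn_Icc one_pos) ht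
  rw [iteratedDerivWithin_eq_iteratedFDerivWithin, iteratedDeriv_eq_iteratedFDeriv, ← h2]
  simp [ftaylorSeriesWithin, iteratedFDerivWithin_univ]

lemma taylor_est {k : ℕ} (hg : ContDiff ℝ ((2*k+1 : ℕ) : ℕ∞) g)
    {CB : ℝ} (x v : Fin d → ℝ)
    (hCB : ∀ y : Fin d → ℝ, |iteratedFDeriv ℝ (2*k+1) g y (fun _ => v)| ≤ CB) :
    |g (x + v) - ∑ j ∈ Finset.range (2*k+1), ((j.factorial : ℝ)⁻¹ *
      iteratedFDeriv ℝ j g x (fun _ => v))| ≤ CB / (2*k).factorial := by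
  set φ : ℝ → ℝ := fun s => g (x + s • v) with hφdef
  have hline : ContDiff ℝ ((2*k+1 : ℕ) : ℕ∞) (fun s : ℝ => x + s • v) :=
    contDiff_const.add (contDiff_id.smul contDiff_const)
  have hφ : ContDiff ℝ ((2*k+1 : ℕ) : ℕ∞) φ := hg.comp hline
  have hmain := taylor_mean_remainder_bound (f := φ) (a := 0) (b := 1) (x := 1) (n := 2*k)
    (C := CB) zero_le_one
    (by
      have h := hφ.contDiffOn (s := Icc (0:ℝ) 1)
      convert h using 2
      norm_cast)
    (right_mem_Icc.mpr zero_le_one)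
    (by
      intro y hy
      rw [idw hφ le_rfl hy, pdLineDeriv hg x v (2*k+1) le_rfl y]
      simpa using hCB (x + y • v))
  rw [taylor_within_apply] at hmain
  have e1 : φ 1 = g (x + v) := by simp [hφdef]
  have e2 : ∀ j ∈ Finset.range (2*k+1),
      (((j.factorial : ℝ)⁻¹ * (1 - 0) ^ j) • iteratedDerivWithin j φ (Icc 0 1) 0)
        = ((j.factorial : ℝ)⁻¹ * iteratedFDeriv ℝ j g x (fun _ => v)) := by
    intro j hj
    rw [idw hφ (le_trans (Nat.lt_succ_iff.mp (Finset.mem_range.mp hj)) (Nat.le_succ _))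
        (left_mem_Icc.mpr zero_le_one),
      pdLineDeriv hg x v j (le_trans (Nat.lt_succ_iff.mp (Finset.mem_range.mp hj)) (Nat.le_succ _)) 0]
    simp [smul_eq_mul]
  rw [Finset.sum_congr rfl e2, e1] at hmain
  calc |g (x + v) - ∑ j ∈ Finset.range (2*k+1), ((j.factorial : ℝ)⁻¹ *
      iteratedFDeriv ℝ j g x (fun _ => v))| ≤ CB * (1 - 0) ^ (2*k+1) / (2*k).factorial := hmain
    _ = CB / (2*k).factorial := by norm_num

lemma integrable_poly {μ : Measure (Fin d → ℝ)} [IsFiniteMeasure μ] {n : ℕ}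
    (hn : Integrable (fun z : Fin d → ℝ => ‖z‖ ^ n) μ) {j : ℕ} (hj : j ≤ n) (ι : Fin j → Fin d) :
    Integrable (fun z : Fin d → ℝ => ∏ m, z (ι m)) μ := by
  refine Integrable.mono' ((integrable_const (1:ℝ)).add hn) ?_ ?_
  · exact Continuous.aestronglyMeasurable
      (continuous_finset_prod _ fun m _ => continuous_apply (ι m))
  · filter_upwards with z
    have h1 : ‖∏ m, z (ι m)‖ ≤ ‖z‖ ^ j := by
      rw [Real.norm_eq_abs, Finset.abs_prod]
      calc ∏ m, |z (ι m)| ≤ ∏ _m : Fin j, ‖z‖ :=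
            Finset.prod_le_prod (fun _ _ => abs_nonneg _)
              (fun m _ => by simpa [Real.norm_eq_abs] using norm_le_pi_norm z (ι m))
        _ = ‖z‖ ^ j := by simp
    have h2 : ‖z‖ ^ j ≤ 1 + ‖z‖ ^ n := by
      rcases le_total (‖z‖) 1 with hc | hc
      · have := pow_le_one₀ (norm_nonneg z) hc (n := j)
        have := pow_nonneg (norm_nonneg z) n
        linarith
      · have := pow_le_pow_right₀ hc hj
        linarith
    exact h1.trans h2

end Aux

section Aux2
open Set
variable {d : ℕ} {g : (Fin d → ℝ) → ℝ}

lemma taylor_main {k : ℕ} (hg : ContDiff ℝ ((2*k+1 : ℕ) : ℕ∞) g)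
    (Mb : (Fin (2*k+1) → Fin d) → ℝ)
    (hMb : ∀ ι : Fin (2*k+1) → Fin d, ∀ y, |multiPDeriv d (countOf ι) g y| ≤ Mb ι) :
    ∀ x v : Fin d → ℝ, |g (x + v) - ∑ j ∈ Finset.range (2*k+1), ((j.factorial : ℝ)⁻¹ *
      iteratedFDeriv ℝ j g x (fun _ => v))|
        ≤ ((∑ ι : Fin (2*k+1) → Fin d, Mb ι) / (2*k).factorial) * ‖v‖^(2*k+1) := by
  have hb : ∀ (y v : Fin d → ℝ), |iteratedFDeriv ℝ (2*k+1) g y (fun _ => v)|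
      ≤ (∑ ι : Fin (2*k+1) → Fin d, Mb ι) * ‖v‖^(2*k+1) := by
    intro y v
    rw [itFD_expand]
    calc |∑ ι : Fin (2*k+1) → Fin d, (∏ m, v (ι m)) *
          iteratedFDeriv ℝ (2*k+1) g y (fun m => Pi.single (ι m) 1)|
        ≤ ∑ ι : Fin (2*k+1) → Fin d, |(∏ m, v (ι m)) *
          iteratedFDeriv ℝ (2*k+1) g y (fun m => Pi.single (ι m) 1)| :=
          Finset.abs_sum_le_sum_abs _ _
      _ ≤ ∑ ι : Fin (2*k+1) → Fin d, ‖v‖^(2*k+1) * Mb ι := by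
          refine Finset.sum_le_sum fun ι _ => ?_
          rw [abs_mul]
          have hprod : |∏ m, v (ι m)| ≤ ‖v‖^(2*k+1) := by
            rw [Finset.abs_prod]
            calc ∏ m, |v (ι m)| ≤ ∏ _m : Fin (2*k+1), ‖v‖ :=
                  Finset.prod_le_prod (fun _ _ => abs_nonneg _)
                    (fun m _ => by simpa [Real.norm_eq_abs] using norm_le_pi_norm v (ι m))
              _ = ‖v‖^(2*k+1) := by simp
          have hco : |iteratedFDeriv ℝ (2*k+1) g y (fun m => Pi.single (ι m) 1)| ≤ Mb ι := by
            have hpp : pders d (List.ofFn ι) g = pders d (sortedOf (countOf ι)) g :=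
              pders_perm hg (perm_sortedOf ι) (by simp)
            rw [itFD_basis hg _ le_rfl ι y, hpp, ← multiPDeriv_eq_pders]
            exact hMb ι y
          exact mul_le_mul hprod hco (abs_nonneg _) (pow_nonneg (norm_nonneg v) _)
      _ = (∑ ι : Fin (2*k+1) → Fin d, Mb ι) * ‖v‖^(2*k+1) := by
          rw [Finset.sum_mul]
          exact Finset.sum_congr rfl fun ι _ => mul_comm _ _
  intro x v
  have h := taylor_est hg x v (CB := (∑ ι : Fin (2*k+1) → Fin d, Mb ι) * ‖v‖^(2*k+1))
    (fun y => hb y v)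
  calc |g (x + v) - ∑ j ∈ Finset.range (2*k+1), ((j.factorial : ℝ)⁻¹ *
      iteratedFDeriv ℝ j g x (fun _ => v))|
      ≤ ((∑ ι : Fin (2*k+1) → Fin d, Mb ι) * ‖v‖^(2*k+1)) / (2*k).factorial := h
    _ = ((∑ ι : Fin (2*k+1) → Fin d, Mb ι) / (2*k).factorial) * ‖v‖^(2*k+1) := by ring

end Aux2

/-- Let `K = μp − μm` be a finite signed measure on `ℝ^d` with `∫ z^γ dK = 0` for
`|γ| ≤ 2k+1` and `∫‖z‖^{2k+1} d|K| < ∞`.  For the rescaled measure `K_L` (so that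
`∫ h dK_L = L^d ∫ h(z/L) dK(z)`), any `f ∈ L¹` and `g ∈ C_b^{2k+1}`,
`|∫∫ f(x)(g(x−z)−g(x)) dK_L(z) dx| ≤ C·L^{d−2k−1}` for all `L ≥ 1`. -/
theorem taylor_remainder_covariance_bound (d k : ℕ)
    (μp μm : Measure (Fin d → ℝ)) [IsFiniteMeasure μp] [IsFiniteMeasure μm]
    (hmom : ∀ γ : Fin d → ℕ, (∑ i, γ i) ≤ 2 * k + 1 →
      (∫ z : Fin d → ℝ, ∏ i, z i ^ γ i ∂μp) = ∫ z : Fin d → ℝ, ∏ i, z i ^ γ i ∂μm)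
    (hint : Integrable (fun z : Fin d → ℝ => ‖z‖ ^ (2 * k + 1)) (μp + μm))
    (f g : (Fin d → ℝ) → ℝ) (hf : Integrable f)
    (hg : ContDiff ℝ ((2 * k + 1 : ℕ) : ℕ∞) g)
    (hgb : ∀ γ : Fin d → ℕ, (∑ i, γ i) ≤ 2 * k + 1 →
      ∃ Mγ : ℝ, ∀ x, |multiPDeriv d γ g x| ≤ Mγ) :
    ∃ C : ℝ, ∀ L : ℝ, 1 ≤ L →
      |L ^ (d : ℕ) *
          ((∫ x : Fin d → ℝ, ∫ z, f x * (g (x - L⁻¹ • z) - g x) ∂μp) -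
            ∫ x : Fin d → ℝ, ∫ z, f x * (g (x - L⁻¹ • z) - g x) ∂μm)| ≤
        C * L ^ ((d : ℝ) - (2 * (k : ℝ) + 1)) := by
  classical
  have hm_p : Integrable (fun z : Fin d → ℝ => ‖z‖ ^ (2*k+1)) μp := (integrable_add_measure.mp hint).1
  have hm_m : Integrable (fun z : Fin d → ℝ => ‖z‖ ^ (2*k+1)) μm := (integrable_add_measure.mp hint).2
  have hgc : Continuous g := hg.continuous
  obtain ⟨M0, hM0⟩ := hgb 0 (by simp)
  have hmz : multiPDeriv d 0 g = g := by
    rw [multiPDeriv_eq_pders]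
    have hz : sortedOf (0 : Fin d → ℕ) = [] := by simp [sortedOf]
    rw [hz, pders_nil]
  have hM0' : ∀ x, |g x| ≤ M0 := by intro x; have := hM0 x; rwa [hmz] at this
  set Mb : (Fin (2*k+1) → Fin d) → ℝ :=
    fun ι => (hgb (countOf ι) (le_of_eq (sum_countOf ι))).choose with hMbdef
  have hMb : ∀ ι : Fin (2*k+1) → Fin d, ∀ y, |multiPDeriv d (countOf ι) g y| ≤ Mb ι :=
    fun ι => (hgb (countOf ι) (le_of_eq (sum_countOf ι))).choose_spec
  set SB := ∑ ι : Fin (2*k+1) → Fin d, Mb ι with hSBdef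
  have hMb0 : ∀ ι, 0 ≤ Mb ι := fun ι => le_trans (abs_nonneg _) (hMb ι 0)
  have hSB0 : 0 ≤ SB := Finset.sum_nonneg fun ι _ => hMb0 ι
  set CR := SB / (2*k).factorial with hCRdef
  have hCR0 : 0 ≤ CR := div_nonneg hSB0 (Nat.cast_nonneg _)
  have TAY : ∀ x v : Fin d → ℝ, |g (x + v) - ∑ j ∈ Finset.range (2*k+1),
      ((j.factorial : ℝ)⁻¹ * iteratedFDeriv ℝ j g x (fun _ => v))| ≤ CR * ‖v‖^(2*k+1) :=
    taylor_main hg Mb hMb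
  have momEq : ∀ (j : ℕ), j ≤ 2*k+1 → ∀ (ι : Fin j → Fin d),
      ∫ z, (∏ m, z (ι m)) ∂μp = ∫ z, (∏ m, z (ι m)) ∂μm := by
    intro j hj ι
    simp_rw [prod_eq_prod_pow ι]
    exact hmom (countOf ι) (le_trans (le_of_eq (sum_countOf ι)) hj)
  have hmass : (μp Set.univ).toReal = (μm Set.univ).toReal := by
    have h0 := momEq 0 (Nat.zero_le _) (fun m => m.elim0)
    simpa [integral_const, Measure.real] using h0
  set Sp := ∫ z, ‖z‖^(2*k+1) ∂μp with hSpdef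
  set Sm := ∫ z, ‖z‖^(2*k+1) ∂μm with hSmdef
  have hSp0 : 0 ≤ Sp := integral_nonneg fun z => pow_nonneg (norm_nonneg z) _
  have hSm0 : 0 ≤ Sm := integral_nonneg fun z => pow_nonneg (norm_nonneg z) _
  set D0 := CR * (Sp + Sm) with hD0def
  have hD00 : 0 ≤ D0 := mul_nonneg hCR0 (by linarith)
  refine ⟨(∫ x, |f x|) * D0, ?_⟩
  intro L hL
  have hL0 : (0:ℝ) < L := lt_of_lt_of_le one_pos hL
  set w : (Fin d → ℝ) → (Fin d → ℝ) := fun z => -(L⁻¹ • z) with hwdef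
  have hxw : ∀ x z : Fin d → ℝ, x - L⁻¹ • z = x + w z := fun x z => sub_eq_add_neg _ _
  set T : (Fin d → ℝ) → (Fin d → ℝ) → ℝ := fun x z => ∑ j ∈ Finset.range (2*k+1),
    ((j.factorial:ℝ)⁻¹ * iteratedFDeriv ℝ j g x (fun _ => w z)) with hTdef
  have Texpand : ∀ x z, T x z = ∑ j ∈ Finset.range (2*k+1), ∑ ι : Fin j → Fin d,
      (((j.factorial:ℝ)⁻¹ * ((-L⁻¹)^j *
        iteratedFDeriv ℝ j g x (fun m => Pi.single (ι m) 1))) * ∏ m, z (ι m)) := by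
    intro x z
    simp only [hTdef]
    refine Finset.sum_congr rfl fun j _ => ?_
    rw [itFD_expand j x (w z), Finset.mul_sum]
    refine Finset.sum_congr rfl fun ι _ => ?_
    have hpw : (∏ m, w z (ι m)) = (-L⁻¹)^j * ∏ m, z (ι m) := by
      have hterm : ∀ m : Fin j, w z (ι m) = (-L⁻¹) * z (ι m) := by
        intro m; simp [hwdef]
      rw [Finset.prod_congr rfl fun m _ => hterm m, Finset.prod_mul_distrib]
      simp
    rw [hpw]; ring
  -- inner bound
  have inner : ∀ x : Fin d → ℝ,
      |(∫ z, (g (x - L⁻¹ • z) - g x) ∂μp) - ∫ z, (g (x - L⁻¹ • z) - g x) ∂μm|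
        ≤ D0 * L⁻¹^(2*k+1) := by
    intro x
    have IG : ∀ (μ : Measure (Fin d → ℝ)), IsFiniteMeasure μ →
        Integrable (fun z => g (x - L⁻¹ • z) - g x) μ := by
      intro μ hfin
      haveI := hfin
      refine Integrable.mono' (integrable_const (M0 + M0)) ?_ ?_
      · exact Continuous.aestronglyMeasurable (by fun_prop)
      · filter_upwards with z
        have h1 := hM0' (x - L⁻¹ • z)
        have h2 := hM0' x
        rw [Real.norm_eq_abs]
        calc |g (x - L⁻¹•z) - g x| ≤ |g (x - L⁻¹•z)| + |g x| := abs_sub _ _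
          _ ≤ M0 + M0 := add_le_add h1 h2
    have IT : ∀ (μ : Measure (Fin d → ℝ)), IsFiniteMeasure μ →
        Integrable (fun z : Fin d → ℝ => ‖z‖^(2*k+1)) μ →
        Integrable (fun z => T x z) μ := by
      intro μ hfin hn
      haveI := hfin
      rw [show (fun z => T x z) = _ from funext (Texpand x)]
      refine integrable_finset_sum _ fun j hj => integrable_finset_sum _ fun ι _ => ?_
      exact ((integrable_poly hn
        (le_trans (Nat.lt_succ_iff.mp (Finset.mem_range.mp hj)) (Nat.le_succ _)) ι).const_mul _)
    have IR : ∀ (μ : Measure (Fin d → ℝ)), IsFiniteMeasure μ →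
        Integrable (fun z : Fin d → ℝ => ‖z‖^(2*k+1)) μ →
        Integrable (fun z => g (x - L⁻¹ • z) - T x z) μ := by
      intro μ hfin hn
      haveI := hfin
      exact (((IG μ hfin).add (integrable_const (g x))).sub (IT μ hfin hn)).congr
        (Filter.Eventually.of_forall fun z => by
          simp only [Pi.add_apply, Pi.sub_apply]
          ring)
    have dec : ∀ (μ : Measure (Fin d → ℝ)), (hfin : IsFiniteMeasure μ) →
        Integrable (fun z : Fin d → ℝ => ‖z‖^(2*k+1)) μ →
        (∫ z, (g (x - L⁻¹ • z) - g x) ∂μ)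
          = (∫ z, T x z ∂μ) - g x * (μ Set.univ).toReal
            + ∫ z, (g (x - L⁻¹ • z) - T x z) ∂μ := by
      intro μ hfin hn
      haveI := hfin
      have hsplit : (fun z => g (x - L⁻¹ • z) - g x)
          = fun z => (T x z - g x) + (g (x - L⁻¹ • z) - T x z) := funext fun z => by ring
      have h1 : Integrable (fun z => T x z - g x) μ := (IT μ hfin hn).sub (integrable_const _)
      have h2 : Integrable (fun z => g (x - L⁻¹ • z) - T x z) μ := IR μ hfin hn
      rw [hsplit, integral_add h1 h2, integral_sub (IT μ hfin hn) (integrable_const _),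
        integral_const]
      simp [smul_eq_mul, mul_comm, Measure.real]
    have ITint : ∀ (μ : Measure (Fin d → ℝ)), (hfin : IsFiniteMeasure μ) →
        Integrable (fun z : Fin d → ℝ => ‖z‖^(2*k+1)) μ →
        ∫ z, T x z ∂μ = ∑ j ∈ Finset.range (2*k+1), ∑ ι : Fin j → Fin d,
          (((j.factorial:ℝ)⁻¹ * ((-L⁻¹)^j *
            iteratedFDeriv ℝ j g x (fun m => Pi.single (ι m) 1))) *
              ∫ z, (∏ m, z (ι m)) ∂μ) := by
      intro μ hfin hn
      haveI := hfin
      rw [show (fun z => T x z) = _ from funext (Texpand x)]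
      rw [integral_finset_sum _ (fun j hj => integrable_finset_sum _ fun ι _ =>
        ((integrable_poly hn
          (le_trans (Nat.lt_succ_iff.mp (Finset.mem_range.mp hj)) (Nat.le_succ _)) ι).const_mul _))]
      refine Finset.sum_congr rfl fun j hj => ?_
      rw [integral_finset_sum _ (fun ι _ =>
        ((integrable_poly hn
          (le_trans (Nat.lt_succ_iff.mp (Finset.mem_range.mp hj)) (Nat.le_succ _)) ι).const_mul _))]
      exact Finset.sum_congr rfl fun ι _ => integral_const_mul _ _
    have e3 : ∫ z, T x z ∂μp = ∫ z, T x z ∂μm := by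
      rw [ITint μp inferInstance hm_p, ITint μm inferInstance hm_m]
      refine Finset.sum_congr rfl fun j hj => Finset.sum_congr rfl fun ι _ => ?_
      rw [momEq j (le_trans (Nat.lt_succ_iff.mp (Finset.mem_range.mp hj)) (Nat.le_succ _)) ι]
    have RB : ∀ (μ : Measure (Fin d → ℝ)), (hfin : IsFiniteMeasure μ) →
        (hn : Integrable (fun z : Fin d → ℝ => ‖z‖^(2*k+1)) μ) →
        |∫ z, (g (x - L⁻¹ • z) - T x z) ∂μ|
          ≤ CR * L⁻¹^(2*k+1) * (∫ z, ‖z‖^(2*k+1) ∂μ) := by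
      intro μ hfin hn
      haveI := hfin
      have hpt : ∀ z, ‖g (x - L⁻¹ • z) - T x z‖ ≤ CR * L⁻¹^(2*k+1) * ‖z‖^(2*k+1) := by
        intro z
        rw [Real.norm_eq_abs, hxw]
        have htay := TAY x (w z)
        have hwn : ‖w z‖ = L⁻¹ * ‖z‖ := by
          rw [hwdef]
          simp only [norm_neg, norm_smul, Real.norm_eq_abs]
          rw [abs_of_pos (inv_pos.mpr hL0)]
        calc |g (x + w z) - T x z| ≤ CR * ‖w z‖^(2*k+1) := htay
          _ = CR * L⁻¹^(2*k+1) * ‖z‖^(2*k+1) := by rw [hwn, mul_pow]; ring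
      have key := norm_integral_le_of_norm_le ((hn.const_mul (CR * L⁻¹^(2*k+1))))
        (Filter.Eventually.of_forall hpt)
      rw [integral_const_mul] at key
      simpa [Real.norm_eq_abs] using key
    rw [dec μp inferInstance hm_p, dec μm inferInstance hm_m]
    have ecomb : (∫ z, T x z ∂μp) - g x * (μp Set.univ).toReal
          + (∫ z, (g (x - L⁻¹ • z) - T x z) ∂μp)
        - ((∫ z, T x z ∂μm) - g x * (μm Set.univ).toReal
          + (∫ z, (g (x - L⁻¹ • z) - T x z) ∂μm))
        = (∫ z, (g (x - L⁻¹ • z) - T x z) ∂μp) - (∫ z, (g (x - L⁻¹ • z) - T x z) ∂μm) := by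
      rw [e3, hmass]; ring
    rw [ecomb]
    have h1 := RB μp inferInstance hm_p
    have h2 := RB μm inferInstance hm_m
    calc |(∫ z, (g (x - L⁻¹ • z) - T x z) ∂μp) - (∫ z, (g (x - L⁻¹ • z) - T x z) ∂μm)|
        ≤ |∫ z, (g (x - L⁻¹ • z) - T x z) ∂μp| + |∫ z, (g (x - L⁻¹ • z) - T x z) ∂μm| :=
          abs_sub _ _
      _ ≤ CR * L⁻¹^(2*k+1) * Sp + CR * L⁻¹^(2*k+1) * Sm := add_le_add h1 h2
      _ = D0 * L⁻¹^(2*k+1) := by rw [hD0def]; ring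
  -- outer part
  have hcontI : ∀ (μ : Measure (Fin d → ℝ)), SFinite μ →
      AEStronglyMeasurable (fun x => ∫ z, (g (x - L⁻¹ • z) - g x) ∂μ) volume := by
    intro μ hsf
    haveI := hsf
    have hcont : Continuous (fun p : (Fin d → ℝ) × (Fin d → ℝ) => g (p.1 - L⁻¹ • p.2) - g p.1) :=
      by fun_prop
    exact (hcont.stronglyMeasurable.integral_prod_right').aestronglyMeasurable
  have hbddI : ∀ (μ : Measure (Fin d → ℝ)), (hfin : IsFiniteMeasure μ) → ∀ x,
      ‖∫ z, (g (x - L⁻¹ • z) - g x) ∂μ‖ ≤ (μ Set.univ).toReal * (M0 + M0) := by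
    intro μ hfin x
    haveI := hfin
    have key := norm_integral_le_of_norm_le (integrable_const (M0 + M0) (μ := μ))
      (Filter.Eventually.of_forall (fun z => by
        rw [Real.norm_eq_abs]
        calc |g (x - L⁻¹•z) - g x| ≤ |g (x - L⁻¹•z)| + |g x| := abs_sub _ _
          _ ≤ M0 + M0 := add_le_add (hM0' _) (hM0' _)))
    rwa [integral_const, smul_eq_mul] at key
  have hintI : ∀ (μ : Measure (Fin d → ℝ)), (hfin : IsFiniteMeasure μ) →
      Integrable (fun z : Fin d → ℝ => ‖z‖^(2*k+1)) μ →
      Integrable (fun x => f x * (∫ z, (g (x - L⁻¹ • z) - g x) ∂μ)) volume := by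
    intro μ hfin hn
    haveI := hfin
    have := hf.bdd_mul (hcontI μ inferInstance) (Filter.Eventually.of_forall (hbddI μ hfin))
    exact this.congr (Filter.Eventually.of_forall fun x => mul_comm _ _)
  have goal_eq : ∀ (μ : Measure (Fin d → ℝ)),
      (∫ x : Fin d → ℝ, ∫ z, f x * (g (x - L⁻¹ • z) - g x) ∂μ)
        = ∫ x : Fin d → ℝ, f x * ∫ z, (g (x - L⁻¹ • z) - g x) ∂μ := by
    intro μ
    exact integral_congr_ae (Filter.Eventually.of_forall fun x => integral_const_mul _ _)
  rw [goal_eq μp, goal_eq μm]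
  have hdiff_eq : (∫ x : Fin d → ℝ, f x * ∫ z, (g (x - L⁻¹ • z) - g x) ∂μp)
      - (∫ x : Fin d → ℝ, f x * ∫ z, (g (x - L⁻¹ • z) - g x) ∂μm)
      = ∫ x : Fin d → ℝ, (f x * (∫ z, (g (x - L⁻¹ • z) - g x) ∂μp)
          - f x * (∫ z, (g (x - L⁻¹ • z) - g x) ∂μm)) :=
    (integral_sub (hintI μp inferInstance hm_p) (hintI μm inferInstance hm_m)).symm
  rw [hdiff_eq]
  have houter : |∫ x : Fin d → ℝ, (f x * (∫ z, (g (x - L⁻¹ • z) - g x) ∂μp)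
      - f x * (∫ z, (g (x - L⁻¹ • z) - g x) ∂μm))| ≤ (∫ x, |f x|) * (D0 * L⁻¹^(2*k+1)) := by
    have key := norm_integral_le_of_norm_le (μ := volume)
      (f := fun x => f x * (∫ z, (g (x - L⁻¹ • z) - g x) ∂μp)
        - f x * (∫ z, (g (x - L⁻¹ • z) - g x) ∂μm))
      (g := fun x => |f x| * (D0 * L⁻¹^(2*k+1)))
      (hf.abs.mul_const _)
      (Filter.Eventually.of_forall (fun x => by
        show ‖f x * (∫ z, (g (x - L⁻¹ • z) - g x) ∂μp)
            - f x * (∫ z, (g (x - L⁻¹ • z) - g x) ∂μm)‖ ≤ |f x| * (D0 * L⁻¹^(2*k+1))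
        have hre : f x * (∫ z, (g (x - L⁻¹ • z) - g x) ∂μp)
            - f x * (∫ z, (g (x - L⁻¹ • z) - g x) ∂μm)
            = f x * ((∫ z, (g (x - L⁻¹ • z) - g x) ∂μp)
              - (∫ z, (g (x - L⁻¹ • z) - g x) ∂μm)) := by ring
        rw [Real.norm_eq_abs, hre, abs_mul]
        exact mul_le_mul_of_nonneg_left (inner x) (abs_nonneg _)))
    rw [integral_mul_const] at key
    simpa [Real.norm_eq_abs] using key
  -- final arithmetic
  have hpow : L ^ (d:ℕ) * L⁻¹^(2*k+1) = L ^ ((d : ℝ) - (2*(k:ℝ)+1)) := by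
    have h1 : (L:ℝ)^(d:ℕ) = L ^ ((d:ℕ):ℝ) := (Real.rpow_natCast L d).symm
    have h2 : L⁻¹^(2*k+1) = L ^ (-(((2*k+1 : ℕ)) : ℝ)) := by
      rw [inv_pow, ← Real.rpow_natCast L (2*k+1), ← Real.rpow_neg hL0.le]
    rw [h1, h2, ← Real.rpow_add hL0]
    congr 1
    push_cast; ring
  calc |L ^ (d:ℕ) * ∫ x : Fin d → ℝ, (f x * (∫ z, (g (x - L⁻¹ • z) - g x) ∂μp)
          - f x * (∫ z, (g (x - L⁻¹ • z) - g x) ∂μm))|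
      = L ^ (d:ℕ) * |∫ x : Fin d → ℝ, (f x * (∫ z, (g (x - L⁻¹ • z) - g x) ∂μp)
          - f x * (∫ z, (g (x - L⁻¹ • z) - g x) ∂μm))| := by
        rw [abs_mul, abs_of_nonneg (pow_nonneg hL0.le _)]
    _ ≤ L ^ (d:ℕ) * ((∫ x, |f x|) * (D0 * L⁻¹^(2*k+1))) :=
        mul_le_mul_of_nonneg_left houter (pow_nonneg hL0.le _)
    _ = ((∫ x, |f x|) * D0) * (L ^ (d:ℕ) * L⁻¹^(2*k+1)) := by ring
    _ = ((∫ x, |f x|) * D0) * L ^ ((d : ℝ) - (2*(k:ℝ)+1)) := by rw [hpow]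
end
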